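/- Let Γ be a finite connected regular simple graph of valency d ≥ 3, let G ≤ Aut(Γ) with Γ (G,2)-arc-transitive, let v be a vertex, and let r be a prime dividing d. Let P be a normal r-subgroup of G_v containing every normal r-subgroup of G_v (i.e. P = O_r(G_v) is the largest normal r-subgroup of G_v). Then either P = 1, or there exists an integer e ≥ 1 such that d = r^e and P is elementary abelian, isomorphic to (Z/rZ)^e; moreover in the latter case the restriction homomorphism φ_v is injective on P and φ_v(P) is a normal subgroup of G_v^{Γ(v)}. -/

import Mathlib

open MulAction

namespace Stmt8

/-- The homomorphism `φ_v` from the vertex-stabilizer `G_v` to the permutation group of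
the neighborhood `Γ(v)`, given by restricting the action. -/
def localHom {V G : Type*} [Group G] [MulAction G V] (Γ : SimpleGraph V)
    (hadj : ∀ (g : G) ⦃a b : V⦄, Γ.Adj a b → Γ.Adj (g • a) (g • b)) (v : V) :
    stabilizer G v →* Equiv.Perm (Γ.neighborSet v) where
  toFun g := Equiv.Perm.subtypePerm (MulAction.toPerm (g : G)) (fun w => by
    have hgv : (g : G) • v = v := mem_stabilizer_iff.mp g.2
    simp only [SimpleGraph.mem_neighborSet, MulAction.toPerm_apply]
    constructor
    · intro hw
      have h1 := hadj ((g : G))⁻¹ hw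
      rw [inv_smul_smul] at h1
      have h2 : ((g : G))⁻¹ • v = v := inv_smul_eq_iff.mpr hgv.symm
      rwa [h2] at h1
    · intro hw
      have h1 := hadj (g : G) hw
      rwa [hgv] at h1)
  map_one' := by
    ext w
    simp [Equiv.Perm.subtypePerm_apply]
  map_mul' g₁ g₂ := by
    ext w
    simp [Equiv.Perm.subtypePerm_apply, mul_smul]
    rfl

/-!
Let `R = O_r(G_v) ∩ G_v^{[1]}`. Since `r ∣ d`, `r ∤ d - 1`: an `r`-subgroup fixing an arc `(u, c)`
and normalized by `G_{uc}` has a fixed point on `Γ(u) \ {c}`, and `G_{uc}` is transitive there, so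
the subgroup fixes `Γ(u)` pointwise. Along an edge `w ~ u` this turns "`R ≤ G_w^{[1]}` and
`R ⊴ G_w`" into `R ≤ G_u^{[1]}`, so `R` is subnormal in `G_u` and lies in the conjugate
`O_r(G_u) ∩ G_u^{[1]}` of `R`, hence equals it. By connectivity `R` fixes every vertex: `R = 1`.

If `P = O_r(G_v) ≠ 1`, then `P ∩ G_x ≤ R = 1` for `x ∈ Γ(v)` by the same fixed-point argument,
so `P` is semiregular on `Γ(v)`. 2-arc-transitivity makes it regular, so `|P| = d`, and makes `G_v`
transitive by conjugation on `P \ {1}`, which forces `P` to be elementary abelian.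
-/
open Subgroup
open scoped Pointwise

section PCore

variable {G : Type*} [Group G]

theorem smul_normalizer (a : MulAut G) (H : Subgroup G) :
    a • normalizer (H : Set G) = normalizer ((a • H : Subgroup G) : Set G) :=
  map_equiv_normalizer_eq H a

/-- `P = O_r(H)`. -/
structure IsPCore (r : ℕ) (H P : Subgroup G) : Prop where
  le : P ≤ H
  le_normalizer : H ≤ normalizer (P : Set G)
  isPGroup : IsPGroup r P
  le_of_isPGroup : ∀ Q : Subgroup G, Q ≤ H → H ≤ normalizer (Q : Set G) → IsPGroup r Q → Q ≤ P

namespace IsPCore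

variable {r : ℕ} {H P : Subgroup G}

theorem smul (hP : IsPCore r H P) (a : MulAut G) : IsPCore r (a • H) (a • P) where
  le := pointwise_smul_le_pointwise_smul_iff.mpr hP.le
  le_normalizer := by
    rw [← smul_normalizer]
    exact pointwise_smul_le_pointwise_smul_iff.mpr hP.le_normalizer
  isPGroup := hP.isPGroup.map _
  le_of_isPGroup Q hQ hHQ hQr := by
    rw [subset_pointwise_smul_iff]
    refine hP.le_of_isPGroup _ ?_ ?_ (hQr.map _)
    · rwa [pointwise_smul_subset_iff, inv_inv]
    · rwa [← smul_normalizer, subset_pointwise_smul_iff, inv_inv]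

/-- The `H`-conjugates of `R` are normal `r`-subgroups of `K`, so they generate an `r`-subgroup
normalized by `H`. -/
theorem le_of_subnormal [Finite G] [Fact r.Prime] (hP : IsPCore r H P) {K R : Subgroup G}
    (hKH : K ≤ H) (hHK : H ≤ normalizer (K : Set G)) (hRK : R ≤ K)
    (hKR : K ≤ normalizer (R : Set G)) (hR : IsPGroup r R) : R ≤ P := by
  set T : Subgroup G := ⨆ h : H, MulAut.conj (h : G) • R
  have hconjK : ∀ h : H, MulAut.conj (h : G) • K = K := fun h =>
    mem_normalizer_iff_map_conj_eq.mp (hHK h.2)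
  have hTK : ∀ h : H, MulAut.conj (h : G) • R ≤ K := fun h =>
    hconjK h ▸ pointwise_smul_le_pointwise_smul_iff.mpr hRK
  set S : H → Subgroup K := fun h => (MulAut.conj (h : G) • R).subgroupOf K
  have hS : ∀ h, (S h).Normal := fun h =>
    (normal_subgroupOf_iff_le_normalizer (hTK h)).mpr <| by
      rw [← hconjK h, ← smul_normalizer]
      exact pointwise_smul_le_pointwise_smul_iff.mpr hKR
  have hT : T = (⨆ h, S h).map K.subtype := by
    simp only [Subgroup.map_iSup, S, subgroupOf_map_subtype, inf_of_le_left (hTK _), T]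
  have hTr : IsPGroup r T :=
    hT ▸ (@Sylow.iSup_of_normal _ _ _ _ S hS fun h => (hR.map _).comap_subtype).map _
  have hHT : H ≤ normalizer (T : Set G) := by
    refine le_normalizer_iff.mpr fun t ht x hx => ?_
    have hle : MulAut.conj t • T ≤ T := by
      change (⨆ h : H, MulAut.conj (h : G) • R).map (MulAut.conj t).toMonoidHom ≤ T
      rw [Subgroup.map_iSup]
      refine iSup_le fun h => ?_
      change MulAut.conj t • MulAut.conj (h : G) • R ≤ T
      rw [smul_smul, ← map_mul]
      exact le_iSup (fun h : H => MulAut.conj (h : G) • R) ⟨t * h, mul_mem ht h.2⟩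
    exact hle (smul_mem_pointwise_smul x _ T hx)
  have hTH : T ≤ H := iSup_le fun h => (hTK h).trans hKH
  calc R = MulAut.conj ((1 : H) : G) • R := by simp
    _ ≤ T := le_iSup (fun h : H => MulAut.conj (h : G) • R) 1
    _ ≤ P := hP.le_of_isPGroup T hTH hHT hTr

end IsPCore

theorem isPCore_map_subtype {r : ℕ} {H : Subgroup G} {P : Subgroup H} (hPn : P.Normal)
    (hPr : IsPGroup r P) (hPmax : ∀ Q : Subgroup H, Q.Normal → IsPGroup r Q → Q ≤ P) :
    IsPCore r H (P.map H.subtype) where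
  le := map_subtype_le P
  le_normalizer := by
    simpa [normalizer_eq_top, ← MonoidHom.range_eq_map] using le_normalizer_map (H := P) H.subtype
  isPGroup := hPr.map _
  le_of_isPGroup Q hQH hHQ hQr := by
    have hQn := (normal_subgroupOf_iff_le_normalizer hQH).mpr hHQ
    have hle := map_mono (f := H.subtype) (hPmax _ hQn hQr.comap_subtype)
    rwa [subgroupOf_map_subtype, inf_of_le_left hQH] at hle

end PCore

section ElementaryAbelian

variable {r : ℕ} [hr : Fact r.Prime]

theorem nonempty_addEquiv_pi_zmod {M : Type*} [AddCommGroup M] [Finite M] {e : ℕ}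
    (hcard : Nat.card M = r ^ e) (hexp : ∀ x : M, r • x = 0) :
    Nonempty (M ≃+ (Fin e → ZMod r)) := by
  let _ : Module (ZMod r) M := AddCommGroup.zmodModule hexp
  have hfin : Module.Finite (ZMod r) M := Module.Finite.of_finite
  -- The module structure is over the ring `ZMod r`; instances over the field are passed by hand.
  have hrank : Module.finrank (ZMod r) M = e := by
    have h := @Module.natCard_eq_pow_finrank (ZMod r) M _ _ _ hfin
    rw [Nat.card_zmod, hcard] at h
    exact Nat.pow_right_injective hr.out.two_le h.symm
  exact ⟨(@Module.finBasisOfFinrankEq (ZMod r) M _ _ _ (.of_divisionRing _ _) _ hfin _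
    hrank).equivFun.toAddEquiv⟩

theorem nonempty_mulEquiv_pi_zmod_of_pow_eq_one {A : Type*} [Group A] [Finite A] {e : ℕ}
    (hcomm : ∀ a b : A, a * b = b * a) (hcard : Nat.card A = r ^ e) (hexp : ∀ x : A, x ^ r = 1) :
    Nonempty (A ≃* (Fin e → Multiplicative (ZMod r))) :=
  let _ : CommGroup A := { ‹Group A› with mul_comm := hcomm }
  (nonempty_addEquiv_pi_zmod (M := Additive A) hcard fun x => by
    rw [← toMul_eq_one, toMul_nsmul]; exact hexp x.toMul).map fun f =>
    (AddEquiv.toMultiplicativeRight f).trans (MulEquiv.funMultiplicative _ _)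

variable {H : Type*} [Group H] [Finite H]

theorem _root_.IsPGroup.pow_eq_one_of_forall_exists_mulAut (hH : IsPGroup r H)
    (htrans : ∀ x y : H, x ≠ 1 → y ≠ 1 → ∃ f : MulAut H, f x = y) (x : H) : x ^ r = 1 := by
  rcases eq_or_ne x 1 with rfl | hx
  · exact one_pow r
  have : Nontrivial H := ⟨⟨x, 1, hx⟩⟩
  obtain ⟨n, hn, hcard⟩ := hH.nontrivial_iff_card.mp ‹_›
  obtain ⟨y, hy⟩ := exists_prime_orderOf_dvd_card' r (hcard ▸ dvd_pow_self r hn.ne')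
  have hy1 : y ≠ 1 := by
    rintro rfl
    exact hr.out.one_lt.ne (orderOf_one.symm.trans hy)
  obtain ⟨f, rfl⟩ := htrans y x hy1 hx
  rw [← map_pow, ← hy, pow_orderOf_eq_one, map_one]

theorem _root_.IsPGroup.mul_comm_of_forall_exists_mulAut (hH : IsPGroup r H)
    (htrans : ∀ x y : H, x ≠ 1 → y ≠ 1 → ∃ f : MulAut H, f x = y) (x y : H) :
    x * y = y * x := by
  rcases eq_or_ne x 1 with rfl | hx
  · rw [one_mul, mul_one]
  have : Nontrivial H := ⟨⟨x, 1, hx⟩⟩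
  have := hH.center_nontrivial
  obtain ⟨z, hz⟩ := exists_ne (1 : center H)
  obtain ⟨f, rfl⟩ := htrans z x (fun h => hz (Subtype.ext h)) hx
  calc f z * y = f (z * f.symm y) := by rw [map_mul, MulEquiv.apply_symm_apply]
    _ = f (f.symm y * z) := by rw [mem_center_iff.mp z.2]
    _ = y * f z := by rw [map_mul, MulEquiv.apply_symm_apply]

theorem _root_.IsPGroup.nonempty_mulEquiv_pi_zmod (hH : IsPGroup r H) {e : ℕ}
    (hcard : Nat.card H = r ^ e) (htrans : ∀ x y : H, x ≠ 1 → y ≠ 1 → ∃ f : MulAut H, f x = y) :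
    Nonempty (H ≃* (Fin e → Multiplicative (ZMod r))) :=
  nonempty_mulEquiv_pi_zmod_of_pow_eq_one (hH.mul_comm_of_forall_exists_mulAut htrans) hcard
    (hH.pow_eq_one_of_forall_exists_mulAut htrans)

end ElementaryAbelian

theorem not_dvd_sub_one {r d : ℕ} (hr : 1 < r) (hrd : r ∣ d) (hd : d ≠ 0) : ¬ r ∣ d - 1 :=
  fun h => hr.ne' <| Nat.dvd_one.mp <| by
    simpa [Nat.sub_sub_self (Nat.one_le_iff_ne_zero.mpr hd)] using Nat.dvd_sub hrd h

section Graph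

variable {V G : Type*} [Group G] [MulAction G V] {Γ : SimpleGraph V}

variable (G) in
def PreservesAdj (Γ : SimpleGraph V) : Prop :=
  ∀ (g : G) ⦃a b : V⦄, Γ.Adj a b → Γ.Adj (g • a) (g • b)

variable (G) in
def IsTwoArcTransitive (Γ : SimpleGraph V) : Prop :=
  ∀ ⦃v0 v1 v2 w0 w1 w2 : V⦄, Γ.Adj v0 v1 → Γ.Adj v1 v2 → v0 ≠ v2 →
    Γ.Adj w0 w1 → Γ.Adj w1 w2 → w0 ≠ w2 → ∃ g : G, g • v0 = w0 ∧ g • v1 = w1 ∧ g • v2 = w2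

variable (G) in
/-- The kernel `G_w^{[1]}` of the action of `G_w` on `Γ(w)`. -/
def localKernel (Γ : SimpleGraph V) (w : V) : Subgroup G :=
  fixingSubgroup G (insert w (Γ.neighborSet w))

theorem mem_localKernel {g : G} {w : V} :
    g ∈ localKernel G Γ w ↔ g • w = w ∧ ∀ x, Γ.Adj w x → g • x = x := by
  simp [localKernel, mem_fixingSubgroup_iff]

theorem localKernel_le_stabilizer (w : V) : localKernel G Γ w ≤ stabilizer G w :=
  fun _ hg => (mem_localKernel.mp hg).1

theorem localKernel_le_stabilizer_of_adj {w u : V} (h : Γ.Adj w u) :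
    localKernel G Γ w ≤ stabilizer G u :=
  fun _ hg => (mem_localKernel.mp hg).2 u h

theorem PreservesAdj.smul_neighborSet (hadj : PreservesAdj G Γ) (g : G) (w : V) :
    g • Γ.neighborSet w = Γ.neighborSet (g • w) := by
  ext x
  rw [Set.mem_smul_set_iff_inv_smul_mem, SimpleGraph.mem_neighborSet,
    SimpleGraph.mem_neighborSet]
  exact ⟨fun h => by simpa using hadj g h, fun h => by simpa using hadj g⁻¹ h⟩

theorem PreservesAdj.conj_smul_localKernel (hadj : PreservesAdj G Γ) (g : G) (w : V) :
    MulAut.conj g • localKernel G Γ w = localKernel G Γ (g • w) := by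
  rw [localKernel, localKernel, ← hadj.smul_neighborSet, ← Set.smul_set_insert,
    SubMulAction.fixingSubgroup_smul_eq_fixingSubgroup_map_conj]
  rfl

theorem PreservesAdj.stabilizer_le_normalizer_localKernel (hadj : PreservesAdj G Γ) (w : V) :
    stabilizer G w ≤ normalizer (localKernel G Γ w : Set G) := fun g hg =>
  mem_normalizer_iff_map_conj_eq.mpr <| by
    change MulAut.conj g • localKernel G Γ w = _
    rw [hadj.conj_smul_localKernel, mem_stabilizer_iff.mp hg]

theorem PreservesAdj.adj_smul (hadj : PreservesAdj G Γ) {v a : V} {g : G}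
    (hg : g ∈ stabilizer G v) (ha : Γ.Adj v a) : Γ.Adj v (g • a) := by
  simpa [mem_stabilizer_iff.mp hg] using hadj g ha

theorem IsTwoArcTransitive.exists_smul_eq [Finite V] (h2arc : IsTwoArcTransitive G Γ) {v u : V}
    (hv : 1 < (Γ.neighborSet v).ncard) (hu : 1 < (Γ.neighborSet u).ncard) :
    ∃ g : G, g • v = u := by
  obtain ⟨a, b, ha, hb, hab⟩ := (Set.one_lt_ncard_iff).mp hv
  obtain ⟨c, c', hc, hc', hcc'⟩ := (Set.one_lt_ncard_iff).mp hu
  obtain ⟨g, -, hg, -⟩ := h2arc (SimpleGraph.Adj.symm ha) hb hab (SimpleGraph.Adj.symm hc) hc' hcc'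
  exact ⟨g, hg⟩

/-- `Q` has a fixed point on `Γ(u) \ {c}`, a set of size prime to `r`, and `G_{uc}` moves that point
anywhere in `Γ(u) \ {c}` while normalizing `Q`. -/
theorem IsTwoArcTransitive.le_localKernel {r : ℕ} [Fact r.Prime] (h2arc : IsTwoArcTransitive G Γ)
    (hadj : PreservesAdj G Γ) {u c : V} (hc : Γ.Adj u c)
    (hcop : ¬ r ∣ (Γ.neighborSet u).ncard - 1) {Q : Subgroup G} (hQ : IsPGroup r Q)
    (hQuc : Q ≤ stabilizer G u ⊓ stabilizer G c)
    (hnorm : stabilizer G u ⊓ stabilizer G c ≤ normalizer (Q : Set G)) :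
    Q ≤ localKernel G Γ u := by
  let Ω : SubMulAction Q V :=
    { carrier := Γ.neighborSet u \ {c}
      smul_mem' := fun q x ⟨hux, hxc⟩ => by
        have hq := hQuc q.2
        refine ⟨?_, fun h => hxc ?_⟩
        · simpa [Subgroup.smul_def, mem_stabilizer_iff.mp hq.1] using hadj (q : G) hux
        · rw [Set.mem_singleton_iff, Subgroup.smul_def, ← mem_stabilizer_iff.mp hq.2] at h
          simpa using h }
  have hΩ : Nat.card Ω = (Γ.neighborSet u).ncard - 1 :=
    (Nat.card_coe_set_eq _).trans (Set.ncard_sdiff_singleton_of_mem hc)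
  obtain ⟨x₀, hx₀⟩ := hQ.nonempty_fixed_point_of_prime_not_dvd_card Ω (hΩ ▸ hcop)
  intro q hq
  refine mem_localKernel.mpr ⟨(hQuc hq).1, fun x hx => ?_⟩
  obtain rfl | hxc := eq_or_ne x c
  · exact (hQuc hq).2
  obtain ⟨s, hsc, hsu, hsx⟩ :=
    h2arc hc.symm x₀.2.1 (fun h => x₀.2.2 h.symm) hc.symm hx (Ne.symm hxc)
  have hq' : s⁻¹ * q * s ∈ Q := (mem_normalizer_iff''.mp (hnorm ⟨hsu, hsc⟩) q).mp hq
  have hfix : (s⁻¹ * q * s) • (x₀ : V) = x₀ := congrArg Subtype.val (hx₀ ⟨_, hq'⟩)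
  calc q • x = s • (s⁻¹ * q * s) • (x₀ : V) := by rw [smul_smul, ← hsx, smul_smul]; group
    _ = x := by rw [hfix, hsx]

end Graph

section Core

variable {V G : Type*} [Group G] [MulAction G V] {Γ : SimpleGraph V} {r : ℕ} {v a : V}
  {P : Subgroup G}

theorem IsPCore.stabilizer_le_normalizer_inf_localKernel (hadj : PreservesAdj G Γ)
    (hP : IsPCore r (stabilizer G v) P) :
    stabilizer G v ≤ normalizer ((P ⊓ localKernel G Γ v : Subgroup G) : Set G) :=
  (le_inf hP.le_normalizer (hadj.stabilizer_le_normalizer_localKernel v)).trans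
    inf_normalizer_le_normalizer_inf

/-- With `R = O_r(G_v) ∩ G_v^{[1]}`: `R` lands in `O_r(G_u) ∩ G_u^{[1]}`, a conjugate of `R`. -/
theorem IsPCore.le_localKernel_and_le_normalizer_of_adj [Finite V] [Finite G] [Fact r.Prime] {d : ℕ}
    (hadj : PreservesAdj G Γ) (h2arc : IsTwoArcTransitive G Γ)
    (hreg : ∀ w, (Γ.neighborSet w).ncard = d) (hrd : r ∣ d)
    (hd : 1 < d) (hP : IsPCore r (stabilizer G v) P) {w u : V} (hwu : Γ.Adj w u)
    (hRw : P ⊓ localKernel G Γ v ≤ localKernel G Γ w)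
    (hNw : stabilizer G w ≤ normalizer ((P ⊓ localKernel G Γ v : Subgroup G) : Set G)) :
    P ⊓ localKernel G Γ v ≤ localKernel G Γ u ∧
      stabilizer G u ≤ normalizer ((P ⊓ localKernel G Γ v : Subgroup G) : Set G) := by
  set R := P ⊓ localKernel G Γ v
  have hRr : IsPGroup r R := hP.isPGroup.to_le inf_le_left
  have hRu : R ≤ localKernel G Γ u :=
    h2arc.le_localKernel hadj hwu.symm
      (by rw [hreg u]; exact not_dvd_sub_one (Fact.out : r.Prime).one_lt hrd (by omega)) hRr
      (le_inf (fun x hx => localKernel_le_stabilizer_of_adj hwu (hRw hx))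
        (fun x hx => localKernel_le_stabilizer w (hRw hx)))
      (inf_le_right.trans hNw)
  obtain ⟨g, rfl⟩ :=
    h2arc.exists_smul_eq (v := v) (u := u) (by rw [hreg]; omega) (by rw [hreg]; omega)
  have hPg : IsPCore r (stabilizer G (g • v)) (MulAut.conj g • P) := by
    rw [stabilizer_smul_eq_stabilizer_map_conj]
    exact hP.smul _
  have hRP : R ≤ MulAut.conj g • P :=
    hPg.le_of_subnormal (localKernel_le_stabilizer _)
      (hadj.stabilizer_le_normalizer_localKernel _) hRu
      ((localKernel_le_stabilizer_of_adj hwu.symm).trans hNw) hRr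
  have hR : MulAut.conj g • R = R := by
    refine (eq_of_le_of_card_ge ?_
      (Nat.card_congr (equivSMul (MulAut.conj g) R).toEquiv).ge).symm
    rw [smul_inf, hadj.conj_smul_localKernel]
    exact le_inf hRP hRu
  refine ⟨hRu, ?_⟩
  calc stabilizer G (g • v) = MulAut.conj g • stabilizer G v :=
        stabilizer_smul_eq_stabilizer_map_conj g v
    _ ≤ MulAut.conj g • normalizer (R : Set G) :=
        pointwise_smul_le_pointwise_smul_iff.mpr (hP.stabilizer_le_normalizer_inf_localKernel hadj)
    _ = normalizer (R : Set G) := by rw [smul_normalizer, hR]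

theorem IsPCore.inf_localKernel_eq_bot [Finite V] [Finite G] [Fact r.Prime] [FaithfulSMul G V]
    {d : ℕ} (hadj : PreservesAdj G Γ)
    (h2arc : IsTwoArcTransitive G Γ) (hconn : Γ.Connected)
    (hreg : ∀ w, (Γ.neighborSet w).ncard = d) (hrd : r ∣ d) (hd : 1 < d)
    (hP : IsPCore r (stabilizer G v) P) : P ⊓ localKernel G Γ v = ⊥ := by
  have key : ∀ w, P ⊓ localKernel G Γ v ≤ localKernel G Γ w ∧
      stabilizer G w ≤ normalizer ((P ⊓ localKernel G Γ v : Subgroup G) : Set G) := by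
    intro w
    induction (SimpleGraph.reachable_iff_reflTransGen v w).mp (hconn.preconnected v w) with
    | refl => exact ⟨inf_le_right, hP.stabilizer_le_normalizer_inf_localKernel hadj⟩
    | tail _ hwu ih => exact hP.le_localKernel_and_le_normalizer_of_adj hadj h2arc hreg hrd hd hwu ih.1 ih.2
  refine eq_bot_iff.mpr fun g hg => eq_of_smul_eq_smul (α := V) fun w => ?_
  rw [one_smul]
  exact localKernel_le_stabilizer w ((key w).1 hg)

theorem IsPCore.inf_stabilizer_eq_bot [Fact r.Prime] (hadj : PreservesAdj G Γ)
    (h2arc : IsTwoArcTransitive G Γ) (hcop : ¬ r ∣ (Γ.neighborSet v).ncard - 1)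
    (hP : IsPCore r (stabilizer G v) P) (hR : P ⊓ localKernel G Γ v = ⊥) {x : V}
    (hx : Γ.Adj v x) : P ⊓ stabilizer G x = ⊥ :=
  eq_bot_iff.mpr <| hR.le.trans' <| le_inf inf_le_left <|
    h2arc.le_localKernel hadj hx hcop (hP.isPGroup.to_le inf_le_left) (inf_le_inf_right _ hP.le)
      ((inf_le_inf hP.le_normalizer Subgroup.le_normalizer).trans inf_normalizer_le_normalizer_inf)

theorem exists_mem_smul_eq (hadj : PreservesAdj G Γ) (h2arc : IsTwoArcTransitive G Γ)
    (hPv : P ≤ stabilizer G v) (hNP : stabilizer G v ≤ normalizer (P : Set G))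
    (hsemi : ∀ x, Γ.Adj v x → P ⊓ stabilizer G x = ⊥) (hP : P ≠ ⊥) (ha : Γ.Adj v a) {x : V}
    (hx : Γ.Adj v x) : ∃ p ∈ P, p • a = x := by
  obtain ⟨⟨p, hp⟩, hp1⟩ := (ne_bot_iff_exists_ne_one).mp hP
  have hpa : p • a ≠ a := fun h => hp1 <| Subtype.ext <| mem_bot.mp <| (hsemi a ha).le ⟨hp, h⟩
  obtain rfl | hxa := eq_or_ne x a
  · exact ⟨1, one_mem P, one_smul G x⟩
  obtain ⟨s, hsa, hsv, hsx⟩ :=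
    h2arc ha.symm (hadj.adj_smul (hPv hp) ha) hpa.symm ha.symm hx hxa.symm
  refine ⟨s * p * s⁻¹, (mem_normalizer_iff.mp (hNP hsv) p).mp hp, ?_⟩
  rw [mul_smul, mul_smul, inv_smul_eq_iff.mpr hsa.symm, hsx]

theorem card_eq_ncard_neighborSet (hadj : PreservesAdj G Γ) (h2arc : IsTwoArcTransitive G Γ)
    (hPv : P ≤ stabilizer G v) (hNP : stabilizer G v ≤ normalizer (P : Set G))
    (hsemi : ∀ x, Γ.Adj v x → P ⊓ stabilizer G x = ⊥) (hP : P ≠ ⊥) (ha : Γ.Adj v a) :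
    Nat.card P = (Γ.neighborSet v).ncard := by
  rw [← Nat.card_coe_set_eq]
  refine Nat.card_eq_of_bijective (fun p => ⟨(p : G) • a, hadj.adj_smul (hPv p.2) ha⟩) ⟨?_, ?_⟩
  · intro p q hpq
    have h : ((q⁻¹ * p : P) : G) • a = a := by
      rw [coe_mul, coe_inv, mul_smul, inv_smul_eq_iff]
      exact congrArg Subtype.val hpq
    simpa [inv_mul_eq_one, eq_comm] using mem_bot.mp <| (hsemi a ha).le ⟨(q⁻¹ * p).2, h⟩
  · rintro ⟨x, hx⟩
    obtain ⟨p, hp, rfl⟩ := exists_mem_smul_eq hadj h2arc hPv hNP hsemi hP ha hx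
    exact ⟨⟨p, hp⟩, rfl⟩

theorem exists_conj_eq (hadj : PreservesAdj G Γ) (h2arc : IsTwoArcTransitive G Γ)
    (hPv : P ≤ stabilizer G v) (hNP : stabilizer G v ≤ normalizer (P : Set G))
    (hsemi : ∀ x, Γ.Adj v x → P ⊓ stabilizer G x = ⊥) (ha : Γ.Adj v a) {p q : G} (hp : p ∈ P)
    (hq : q ∈ P) (hp1 : p ≠ 1) (hq1 : q ≠ 1) : ∃ s ∈ stabilizer G v, s * p * s⁻¹ = q := by
  have hmoves : ∀ {g}, g ∈ P → g ≠ 1 → g • a ≠ a := fun hg hg1 h =>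
    hg1 <| mem_bot.mp <| (hsemi a ha).le ⟨hg, h⟩
  obtain ⟨s, hsp, hsv, hsa⟩ := h2arc (hadj.adj_smul (hPv hp) ha).symm ha (hmoves hp hp1)
    (hadj.adj_smul (hPv hq) ha).symm ha (hmoves hq hq1)
  refine ⟨s, hsv, ?_⟩
  have hconj : q⁻¹ * (s * p * s⁻¹) ∈ P :=
    mul_mem (inv_mem hq) ((mem_normalizer_iff.mp (hNP hsv) p).mp hp)
  have hfix : (q⁻¹ * (s * p * s⁻¹)) • a = a := by
    rw [mul_smul, mul_smul, mul_smul, inv_smul_eq_iff.mpr hsa.symm, hsp, inv_smul_smul]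
  exact (inv_mul_eq_one.mp (mem_bot.mp ((hsemi a ha).le ⟨hconj, hfix⟩))).symm

end Core

section LocalAction

variable {V G : Type*} [Group G] [MulAction G V] {Γ : SimpleGraph V} {v : V}

theorem localHom_eq_one_iff (hadj : PreservesAdj G Γ) (g : stabilizer G v) :
    localHom Γ hadj v g = 1 ↔ (g : G) ∈ localKernel G Γ v := by
  simp [mem_localKernel, Equiv.ext_iff, localHom, Subtype.ext_iff, mem_stabilizer_iff.mp g.2]

theorem injective_localHom_comp_subtype (hadj : PreservesAdj G Γ)
    {P : Subgroup (stabilizer G v)} (hP : P.map (stabilizer G v).subtype ⊓ localKernel G Γ v = ⊥) :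
    Function.Injective ((localHom Γ hadj v).comp P.subtype) :=
  (injective_iff_map_eq_one _).mpr fun x hx => Subtype.ext <| Subtype.ext <| mem_bot.mp <|
    hP ▸ ⟨mem_map_of_mem _ x.2, (localHom_eq_one_iff hadj _).mp hx⟩

end LocalAction

theorem normal_map_subgroupOf_map_top {A B : Type*} [Group A] [Group B] (f : A →* B)
    {N : Subgroup A} (hN : N.Normal) : ((N.map f).subgroupOf ((⊤ : Subgroup A).map f)).Normal :=
  (normal_subgroupOf_iff_le_normalizer (map_mono le_top)).mpr <| by
    simpa [normalizer_eq_top] using le_normalizer_map (H := N) f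

/-- Let `Γ` be a finite connected regular graph of valency `d ≥ 3`,
`G ≤ Aut Γ` with `Γ` `(G,2)`-arc-transitive, `v` a vertex and `r` a prime dividing `d`.
Let `P = O_r(G_v)` be the largest normal `r`-subgroup of `G_v`. Then either `P = 1`, or
`d = r^e` and `P ≅ (ℤ/rℤ)^e` for some `e ≥ 1`; moreover in the latter case `φ_v` is
injective on `P` and `φ_v(P)` is normal in `G_v^{Γ(v)}`. -/
theorem stmt_8 {V G : Type*} [Fintype V] [Group G] [MulAction G V]
    (Γ : SimpleGraph V) (d : ℕ) (hd : 3 ≤ d)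
    (hreg : ∀ w : V, (Γ.neighborSet w).ncard = d)
    (hconn : Γ.Connected)
    (hadj : ∀ (g : G) ⦃a b : V⦄, Γ.Adj a b → Γ.Adj (g • a) (g • b))
    (hfaith : ∀ g : G, (∀ x : V, g • x = x) → g = 1)
    (h2arc : ∀ ⦃v0 v1 v2 w0 w1 w2 : V⦄, Γ.Adj v0 v1 → Γ.Adj v1 v2 → v0 ≠ v2 →
      Γ.Adj w0 w1 → Γ.Adj w1 w2 → w0 ≠ w2 →
        ∃ g : G, g • v0 = w0 ∧ g • v1 = w1 ∧ g • v2 = w2)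
    (v : V) (r : ℕ) (hr : r.Prime) (hrd : r ∣ d)
    (P : Subgroup (stabilizer G v)) (hPnormal : P.Normal) (hPr : IsPGroup r P)
    (hPmax : ∀ Q : Subgroup (stabilizer G v), Q.Normal → IsPGroup r Q → Q ≤ P) :
    P = ⊥ ∨
      ∃ e : ℕ, 1 ≤ e ∧ d = r ^ e ∧
        Nonempty (P ≃* (Fin e → Multiplicative (ZMod r))) ∧
        Function.Injective
          (fun x : P => localHom Γ hadj v (x : stabilizer G v)) ∧
        ((Subgroup.map (localHom Γ hadj v) P).subgroupOf
          (Subgroup.map (localHom Γ hadj v) (⊤ : Subgroup (stabilizer G v)))).Normal := by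
  have := Fact.mk hr
  have : FaithfulSMul G V :=
    ⟨fun h => (inv_mul_eq_one.mp (hfaith _ fun x => by rw [mul_smul, h, inv_smul_smul])).symm⟩
  have : Finite G := Finite.of_injective _ (MulAction.toPerm_injective (α := G) (β := V))
  have hP' := isPCore_map_subtype hPnormal hPr hPmax
  have hR := hP'.inf_localKernel_eq_bot hadj h2arc hconn hreg hrd (by omega)
  refine (eq_or_ne P ⊥).imp id fun hP => ?_
  have hsemi (x : V) (hx : Γ.Adj v x) := hP'.inf_stabilizer_eq_bot hadj h2arc
    (by rw [hreg v]; exact not_dvd_sub_one hr.one_lt hrd (by omega)) hR hx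
  have hP'ne := (map_eq_bot_iff_of_injective P (stabilizer G v).subtype_injective).not.mpr hP
  obtain ⟨a, ha⟩ : (Γ.neighborSet v).Nonempty :=
    Set.nonempty_of_ncard_ne_zero (by rw [hreg v]; omega)
  have hcard : Nat.card P = d := by
    rw [← hreg v, ← card_eq_ncard_neighborSet hadj h2arc hP'.le hP'.le_normalizer hsemi hP'ne ha,
      card_map_of_injective Subtype.coe_injective]
  have htrans (x y : P) (hx : x ≠ 1) (hy : y ≠ 1) : ∃ f : MulAut P, f x = y := by
    obtain ⟨s, hs, hsxy⟩ := exists_conj_eq hadj h2arc hP'.le hP'.le_normalizer hsemi ha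
      (mem_map_of_mem _ x.2) (mem_map_of_mem _ y.2) (by simpa using hx) (by simpa using hy)
    exact ⟨MulAut.conjNormal ⟨s, hs⟩, Subtype.ext (Subtype.ext (by simpa using hsxy))⟩
  obtain ⟨e, he⟩ := IsPGroup.iff_card.mp hPr
  refine ⟨e, Nat.pos_of_ne_zero fun h0 => ?_, hcard.symm.trans he,
    hPr.nonempty_mulEquiv_pi_zmod he htrans, injective_localHom_comp_subtype hadj hR,
    normal_map_subgroupOf_map_top _ hPnormal⟩
  rw [h0, pow_zero] at he
  omega

end Stmt8
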